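/- arXiv:1609.01249 — 7 statements merged into one kernel-verified Lean document; each statement's English description precedes it below -/
import Mathlib

section
/- For every natural number m ≥ 1, every n ≥ 1, and all real numbers x_1, ..., x_n, the quantity G_{2m}(x) = Σ_{r=0}^{2m} (-1)^r (Σ_{k=1}^n x_k^r)(Σ_{k=1}^n x_k^{2m-r}) is nonnegative. -/
/-!
Expanding the products of power sums gives
`G_{2m}(x) = ∑_{j,k} ∑_{r ≤ 2m} (-x_j)^r x_k^(2m-r)`, and each inner sum is a homogeneous geometric
sum `∑_{i<n} a^i b^(n-1-i)` of odd length `n`. Such a sum is nonnegative: multiplied by `a - b` it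
gives `a^n - b^n`, which has the sign of `a - b` since `n` is odd.
-/

open Finset

theorem Odd.geom_sum₂_nonneg {R : Type*} [CommRing R] [LinearOrder R] [IsStrictOrderedRing R]
    {n : ℕ} (hn : Odd n) (x y : R) : 0 ≤ ∑ i ∈ range n, x ^ i * y ^ (n - 1 - i) := by
  have hmul := geom_sum₂_mul x y n
  rcases lt_trichotomy x y with hxy | rfl | hxy
  · have : x ^ n - y ^ n < 0 := sub_neg.mpr (hn.pow_lt_pow.mpr hxy)
    exact (pos_of_mul_neg_left (hmul ▸ this) (sub_neg.mpr hxy).le).le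
  · rw [geom_sum₂_self]
    exact mul_nonneg n.cast_nonneg ((hn.tsub_odd odd_one).pow_nonneg x)
  · have : 0 < x ^ n - y ^ n := sub_pos.mpr (hn.pow_lt_pow.mpr hxy)
    exact (pos_of_mul_pos_left (hmul ▸ this) (sub_pos.mpr hxy).le).le

theorem alternating_powerSum_products_eq_sum_geom_sum₂ {ι R : Type*} [Fintype ι] [CommRing R]
    (N : ℕ) (x : ι → R) :
    ∑ r ∈ range (N + 1), (-1 : R) ^ r * (∑ k, x k ^ r) * (∑ k, x k ^ (N - r)) =
      ∑ j, ∑ k, ∑ r ∈ range (N + 1), (-x j) ^ r * x k ^ (N + 1 - 1 - r) := by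
  simp_rw [Nat.add_sub_cancel, mul_assoc, sum_mul_sum, mul_sum, neg_pow (x _), mul_assoc]
  rw [sum_comm]
  exact sum_congr rfl fun j _ => sum_comm

theorem gasparyan_nonneg_general (m n : ℕ) (x : Fin n → ℝ) :
    0 ≤ ∑ r ∈ Finset.range (2 * m + 1),
      (-1 : ℝ) ^ r * (∑ k, x k ^ r) * (∑ k, x k ^ (2 * m - r)) := by
  rw [alternating_powerSum_products_eq_sum_geom_sum₂]
  exact sum_nonneg fun j _ => sum_nonneg fun k _ =>
    (odd_two_mul_add_one m).geom_sum₂_nonneg (-x j) (x k)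

theorem gasparyan_nonneg (m n : ℕ) (hm : 1 ≤ m) (hn : 1 ≤ n) (x : Fin n → ℝ) :
    0 ≤ ∑ r ∈ Finset.range (2 * m + 1),
      (-1 : ℝ) ^ r * (∑ k, x k ^ r) * (∑ k, x k ^ (2 * m - r)) :=
  gasparyan_nonneg_general m n x
end

section
/- If m is an even positive integer, then for all real x_1,...,x_n, G_{2m}(x) ≥ (Σ_{i=1}^n x_i^m)^2. -/
/-!
Expanding the power sums, `G_{2m}(x) = ∑_{i,j} ∑_{r ≤ 2m} (-x_i)^r x_j^(2m-r)` while
`(∑ x_i^m)^2 = ∑_{i,j} x_i^m x_j^m`, so it suffices to compare the two-variable terms.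
Multiplied by `a + b`, the difference `∑_{r ≤ 2m} (-a)^r b^(2m-r) - a^m b^m` becomes
`(a^m - b^m)(a^(m+1) - b^(m+1))`. One of `m`, `m + 1` is even, and `a^(2t) - b^(2t)` is
`(a + b)(a - b)` times a sum of even powers; the other is odd, and `a^l - b^l` has the sign of
`a - b`. So the difference is `(a - b)(a^l - b^l)` times a nonnegative factor when `a + b ≠ 0`,
while on `a + b = 0` all `2m + 1` terms of the sum equal `a^(2m)`.
-/

open Finset

variable {R : Type*}

section CommRing

variable [CommRing R]

theorem add_mul_geom_sum₂_neg_sub_pow_mul_pow (a b : R) (m : ℕ) :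
    (a + b) * (∑ r ∈ range (2 * m + 1), (-a) ^ r * b ^ (2 * m - r) - a ^ m * b ^ m) =
      (a ^ m - b ^ m) * (a ^ (m + 1) - b ^ (m + 1)) := by
  have h := geom_sum₂_mul (-a) b (2 * m + 1)
  simp only [add_tsub_cancel_right, (odd_two_mul_add_one m).neg_pow] at h
  linear_combination -h

theorem pow_two_mul_sub_pow_two_mul (a b : R) (t : ℕ) :
    a ^ (2 * t) - b ^ (2 * t) =
      (a + b) * (a - b) * ∑ i ∈ range t, (a ^ 2) ^ i * (b ^ 2) ^ (t - 1 - i) := by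
  rw [pow_mul, pow_mul, ← geom_sum₂_mul]
  ring

end CommRing

section Ordered

variable [CommRing R] [LinearOrder R] [IsStrictOrderedRing R]

theorem Odd.sub_mul_pow_sub_pow_nonneg {l : ℕ} (hl : Odd l) (a b : R) :
    0 ≤ (a - b) * (a ^ l - b ^ l) := by
  rcases le_total a b with h | h
  · exact mul_nonneg_of_nonpos_of_nonpos (sub_nonpos.2 h) (sub_nonpos.2 (hl.pow_le_pow.2 h))
  · exact mul_nonneg (sub_nonneg.2 h) (sub_nonneg.2 (hl.pow_le_pow.2 h))

theorem exists_nonneg_pow_two_mul_sub_pow_mul_pow_sub_pow_eq (a b : R) (t : ℕ) {l : ℕ}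
    (hl : Odd l) : ∃ z, 0 ≤ z ∧ (a ^ (2 * t) - b ^ (2 * t)) * (a ^ l - b ^ l) = (a + b) * z :=
  ⟨(a - b) * (a ^ l - b ^ l) * ∑ i ∈ range t, (a ^ 2) ^ i * (b ^ 2) ^ (t - 1 - i),
    mul_nonneg (hl.sub_mul_pow_sub_pow_nonneg a b) (sum_nonneg fun i _ => by positivity),
    by rw [pow_two_mul_sub_pow_two_mul]; ring⟩

theorem exists_nonneg_pow_sub_pow_mul_pow_succ_sub_pow_succ_eq (a b : R) (n : ℕ) :
    ∃ z, 0 ≤ z ∧ (a ^ n - b ^ n) * (a ^ (n + 1) - b ^ (n + 1)) = (a + b) * z := by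
  rcases n.even_or_odd' with ⟨t, rfl | rfl⟩
  · exact exists_nonneg_pow_two_mul_sub_pow_mul_pow_sub_pow_eq a b t (odd_two_mul_add_one t)
  · rw [mul_comm, show 2 * t + 1 + 1 = 2 * (t + 1) by ring]
    exact exists_nonneg_pow_two_mul_sub_pow_mul_pow_sub_pow_eq a b (t + 1) (odd_two_mul_add_one t)

theorem pow_mul_pow_le_geom_sum₂_neg (a b : R) (m : ℕ) :
    a ^ m * b ^ m ≤ ∑ r ∈ range (2 * m + 1), (-a) ^ r * b ^ (2 * m - r) := by
  rcases eq_or_ne (a + b) 0 with hab | hab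
  · obtain rfl : -a = b := neg_eq_of_add_eq_zero_right hab
    have hsum : ∑ r ∈ range (2 * m + 1), (-a) ^ r * (-a) ^ (2 * m - r) =
        ∑ r ∈ range (2 * m + 1), (-a) ^ (2 * m) :=
      sum_congr rfl fun r hr => by rw [← pow_add, Nat.add_sub_cancel' (mem_range_succ_iff.1 hr)]
    have hdiag : a ^ m * (-a) ^ m ≤ (-a) ^ (2 * m) :=
      calc a ^ m * (-a) ^ m ≤ |a ^ m * (-a) ^ m| := le_abs_self _
        _ = (-a) ^ (2 * m) := by
          rw [abs_mul, abs_pow, abs_pow, abs_neg, ← pow_add, ← two_mul,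
            (even_two_mul m).pow_abs, (even_two_mul m).neg_pow]
    rw [hsum, sum_const, card_range, nsmul_eq_mul]
    refine hdiag.trans (le_mul_of_one_le_left ((even_two_mul m).pow_nonneg (-a)) ?_)
    exact_mod_cast Nat.le_add_left 1 (2 * m)
  · obtain ⟨z, hz, hfactor⟩ := exists_nonneg_pow_sub_pow_mul_pow_succ_sub_pow_succ_eq a b m
    have h := add_mul_geom_sum₂_neg_sub_pow_mul_pow a b m
    rw [hfactor] at h
    linarith [mul_left_cancel₀ hab h]

end Ordered

theorem gasparyan_even_general (m n : ℕ) (x : Fin n → ℝ) :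
    (∑ i, x i ^ m) ^ 2 ≤
      ∑ r ∈ Finset.range (2 * m + 1),
        (-1 : ℝ) ^ r * (∑ k, x k ^ r) * (∑ k, x k ^ (2 * m - r)) := by
  have hterm (r : ℕ) : (-1 : ℝ) ^ r * (∑ k, x k ^ r) * (∑ k, x k ^ (2 * m - r)) =
      ∑ i, ∑ j, (-x i) ^ r * x j ^ (2 * m - r) := by
    rw [mul_assoc, sum_mul_sum, mul_sum]
    refine sum_congr rfl fun i _ => ?_
    rw [mul_sum]
    exact sum_congr rfl fun j _ => by rw [neg_pow (x i), mul_assoc]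
  have hG : ∑ r ∈ range (2 * m + 1), (-1 : ℝ) ^ r * (∑ k, x k ^ r) * (∑ k, x k ^ (2 * m - r)) =
      ∑ i, ∑ j, ∑ r ∈ range (2 * m + 1), (-x i) ^ r * x j ^ (2 * m - r) := by
    rw [sum_congr rfl fun r _ => hterm r, sum_comm]
    exact sum_congr rfl fun i _ => sum_comm
  rw [hG, sq, sum_mul_sum]
  gcongr with i _ j _
  exact pow_mul_pow_le_geom_sum₂_neg (x i) (x j) m

theorem gasparyan_even (m n : ℕ) (hm : 1 ≤ m) (hme : Even m) (x : Fin n → ℝ) :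
    (∑ i, x i ^ m) ^ 2 ≤
      ∑ r ∈ Finset.range (2 * m + 1),
        (-1 : ℝ) ^ r * (∑ k, x k ^ r) * (∑ k, x k ^ (2 * m - r)) :=
  gasparyan_even_general m n x
end

section
/- If m is even, x_1,...,x_n are all positive, and G_{2m}(x) = (Σ_{i=1}^n x_i^m)^2, then x_1 = x_2 = ... = x_n. -/
/-!
Expanding both products, `G_{2m}(x) - S_m ^ 2` is the sum over all ordered pairs `(k, l)` of
`D(x_k, x_l)`, where `D(a, b) = ∑_{r ≤ 2m} (-a)^r b^(2m-r) - a^m b^m`. Summing the geometric series,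
`(a + b) D(a, b) = a^(2m+1) + b^(2m+1) - (a + b) a^m b^m = (a^m - b^m)(a^(m+1) - b^(m+1))`,
whose two factors have the same sign for `a, b > 0`. So every `D(x_k, x_l)` is nonnegative, and
the hypothesis forces all of them to vanish, i.e. `x_k = x_l`.
-/

open Finset

section CommRing

variable {R : Type*} [CommRing R]

theorem sum_range_alternating_mul_add (m : ℕ) (a b : R) :
    (∑ r ∈ range (2 * m + 1), (-1) ^ r * a ^ r * b ^ (2 * m - r)) * (a + b)
      = a ^ (2 * m + 1) + b ^ (2 * m + 1) := by
  have h := geom_sum₂_mul (-a) b (2 * m + 1)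
  rw [Nat.add_sub_cancel, Odd.neg_pow (by exact ⟨m, rfl⟩)] at h
  simp only [neg_pow a] at h
  linear_combination -h

def pairDefect (m : ℕ) (a b : R) : R :=
  ∑ r ∈ range (2 * m + 1), (-1) ^ r * a ^ r * b ^ (2 * m - r) - a ^ m * b ^ m

theorem pairDefect_mul_add (m : ℕ) (a b : R) :
    pairDefect m a b * (a + b) = (a ^ m - b ^ m) * (a ^ (m + 1) - b ^ (m + 1)) := by
  rw [pairDefect, sub_mul, sum_range_alternating_mul_add]
  ring

theorem sum_alternating_sub_sq_eq_sum_pairDefect {ι : Type*} [Fintype ι] (m : ℕ) (x : ι → R) :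
    ∑ r ∈ range (2 * m + 1), (-1) ^ r * (∑ k, x k ^ r) * (∑ k, x k ^ (2 * m - r))
        - (∑ k, x k ^ m) ^ 2
      = ∑ p : ι × ι, pairDefect m (x p.1) (x p.2) := by
  rw [Fintype.sum_prod_type, sq, sum_mul_sum]
  simp only [pairDefect, sum_sub_distrib, mul_sum, sum_mul, mul_assoc]
  congr 1
  rw [sum_comm]
  simp_rw [sum_comm (s := range (2 * m + 1))]
  exact sum_comm

end CommRing

theorem pow_sub_pow_mul_pow_sub_pow_nonneg {a b : ℝ} (ha : 0 ≤ a) (hb : 0 ≤ b) (m k : ℕ) :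
    0 ≤ (a ^ m - b ^ m) * (a ^ k - b ^ k) := by
  rcases le_total a b with hab | hab
  · exact mul_nonneg_of_nonpos_of_nonpos (sub_nonpos.2 (pow_le_pow_left₀ ha hab m))
      (sub_nonpos.2 (pow_le_pow_left₀ ha hab k))
  · exact mul_nonneg (sub_nonneg.2 (pow_le_pow_left₀ hb hab m))
      (sub_nonneg.2 (pow_le_pow_left₀ hb hab k))

theorem pairDefect_nonneg {a b : ℝ} (ha : 0 < a) (hb : 0 < b) (m : ℕ) :
    0 ≤ pairDefect m a b := by
  have h := pow_sub_pow_mul_pow_sub_pow_nonneg ha.le hb.le m (m + 1)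
  rw [← pairDefect_mul_add] at h
  exact nonneg_of_mul_nonneg_left h (add_pos ha hb)

theorem eq_of_pairDefect_eq_zero {a b : ℝ} (ha : 0 < a) (hb : 0 < b) {m : ℕ} (hm : m ≠ 0)
    (h : pairDefect m a b = 0) : a = b := by
  have h' := pairDefect_mul_add m a b
  rw [h, zero_mul, eq_comm, mul_eq_zero, sub_eq_zero, sub_eq_zero,
    pow_left_inj₀ ha.le hb.le hm, pow_left_inj₀ ha.le hb.le m.succ_ne_zero, or_self] at h'
  exact h'

theorem gasparyan_even_eq_iff_general (m n : ℕ) (hm : 1 ≤ m)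
    (x : Fin n → ℝ) (hx : ∀ i, 0 < x i)
    (heq : ∑ r ∈ Finset.range (2 * m + 1),
        (-1 : ℝ) ^ r * (∑ k, x k ^ r) * (∑ k, x k ^ (2 * m - r))
      = (∑ i, x i ^ m) ^ 2) :
    ∀ i j, x i = x j := by
  have hsum : ∑ p : Fin n × Fin n, pairDefect m (x p.1) (x p.2) = 0 := by
    rw [← sum_alternating_sub_sq_eq_sum_pairDefect, heq, sub_self]
  have hzero := (Fintype.sum_eq_zero_iff_of_nonneg
    fun p => pairDefect_nonneg (hx p.1) (hx p.2) m).1 hsum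
  intro i j
  exact eq_of_pairDefect_eq_zero (hx i) (hx j) (by omega) (congrFun hzero (i, j))

theorem gasparyan_even_eq_iff (m n : ℕ) (hm : 1 ≤ m) (hme : Even m) (hn : 2 ≤ n)
    (x : Fin n → ℝ) (hx : ∀ i, 0 < x i)
    (heq : ∑ r ∈ Finset.range (2 * m + 1),
        (-1 : ℝ) ^ r * (∑ k, x k ^ r) * (∑ k, x k ^ (2 * m - r))
      = (∑ i, x i ^ m) ^ 2) :
    ∀ i j, x i = x j :=
  gasparyan_even_eq_iff_general m n hm x hx heq
end

section
/- Let a_1,...,a_n be positive reals and F(r) = (Σ_{i=1}^n a_i^r)(Σ_{j=1}^n a_j^{2m-r}). If 0 ≤ r < s ≤ m, then F(r) ≥ F(s); i.e., F is nonincreasing on [0, m]. -/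
/-!
Symmetrize the product of sums: `2 (∑ aᵢʳ)(∑ aⱼ^(t-r))` is the double sum of
`aᵢʳ aⱼ^(t-r) + aⱼʳ aᵢ^(t-r)`. For `r ≤ s ≤ t - s`, each such pair decreases from `r` to `s`,
because the difference factors as `(aᵢaⱼ)ʳ (aᵢᵘ - aⱼᵘ)(aᵢᵛ - aⱼᵛ)` with `u = s - r ≥ 0`,
`v = t - s - r ≥ 0`, and both factors have the sign of `aᵢ - aⱼ`.
-/

open Finset

lemma Finset.two_mul_sum_mul_sum {ι R : Type*} [CommSemiring R] (s : Finset ι) (f g : ι → R) :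
    2 * ((∑ i ∈ s, f i) * ∑ i ∈ s, g i) = ∑ i ∈ s, ∑ j ∈ s, (f i * g j + f j * g i) := by
  simp only [sum_add_distrib]
  rw [two_mul, sum_mul_sum, sum_comm (s := s) (t := s) (f := fun j i => f i * g j)]

namespace Real

lemma rpow_sub_rpow_mul_rpow_sub_rpow_nonneg {x y u v : ℝ} (hx : 0 ≤ x) (hy : 0 ≤ y)
    (hu : 0 ≤ u) (hv : 0 ≤ v) : 0 ≤ (x ^ u - y ^ u) * (x ^ v - y ^ v) := by
  rcases le_total x y with h | h
  · exact mul_nonneg_of_nonpos_of_nonpos (sub_nonpos.2 (rpow_le_rpow hx h hu))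
      (sub_nonpos.2 (rpow_le_rpow hx h hv))
  · exact mul_nonneg (sub_nonneg.2 (rpow_le_rpow hy h hu)) (sub_nonneg.2 (rpow_le_rpow hy h hv))

lemma rpow_add_mul_rpow_add_add_le {x y : ℝ} (hx : 0 < x) (hy : 0 < y) (r : ℝ) {u v : ℝ}
    (hu : 0 ≤ u) (hv : 0 ≤ v) :
    x ^ (r + u) * y ^ (r + v) + y ^ (r + u) * x ^ (r + v)
      ≤ x ^ r * y ^ (r + u + v) + y ^ r * x ^ (r + u + v) := by
  have key := mul_nonneg (mul_pos (rpow_pos_of_pos hx r) (rpow_pos_of_pos hy r)).le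
    (rpow_sub_rpow_mul_rpow_sub_rpow_nonneg hx.le hy.le hu hv)
  simp only [rpow_add hx, rpow_add hy]
  nlinarith [key]

lemma rpow_mul_rpow_sub_add_le {x y : ℝ} (hx : 0 < x) (hy : 0 < y) {r s t : ℝ}
    (hrs : r ≤ s) (hst : s + r ≤ t) :
    x ^ s * y ^ (t - s) + y ^ s * x ^ (t - s) ≤ x ^ r * y ^ (t - r) + y ^ r * x ^ (t - r) := by
  have h := rpow_add_mul_rpow_add_add_le hx hy r (sub_nonneg.2 hrs)
    (show 0 ≤ t - s - r by linarith)
  rwa [add_sub_cancel, show r + (t - s - r) = t - s by ring,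
    show s + (t - s - r) = t - r by ring] at h

end Real

lemma Finset.antitoneOn_sum_rpow_mul_sum_rpow_sub {ι : Type*} (s : Finset ι) {a : ι → ℝ}
    (ha : ∀ i ∈ s, 0 < a i) (t : ℝ) :
    AntitoneOn (fun r => (∑ i ∈ s, a i ^ r) * ∑ i ∈ s, a i ^ (t - r)) (Set.Iic (t / 2)) := by
  intro r hr p hp hrp
  have hpr : p + r ≤ t := by
    linarith [Set.mem_Iic.1 hr, Set.mem_Iic.1 hp]
  refine le_of_mul_le_mul_left ?_ two_pos
  simp only [two_mul_sum_mul_sum]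
  exact sum_le_sum fun i hi => sum_le_sum fun j hj =>
    Real.rpow_mul_rpow_sub_add_le (ha i hi) (ha j hj) hrp hpr

theorem F_antitone_general (m n : ℕ) (a : Fin n → ℝ) (ha : ∀ i, 0 < a i)
    (r s : ℝ) (hrs : r < s) (hs : s ≤ m) :
    (∑ i, a i ^ s) * (∑ j, a j ^ ((2 * m : ℝ) - s))
      ≤ (∑ i, a i ^ r) * (∑ j, a j ^ ((2 * m : ℝ) - r)) := by
  have hmid : (2 * m : ℝ) / 2 = m := by ring
  exact antitoneOn_sum_rpow_mul_sum_rpow_sub univ (fun i _ => ha i) (2 * m)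
    (by rw [Set.mem_Iic, hmid]; linarith) (by rwa [Set.mem_Iic, hmid]) hrs.le

theorem F_antitone (m n : ℕ) (hm : 1 ≤ m) (a : Fin n → ℝ) (ha : ∀ i, 0 < a i)
    (r s : ℝ) (hr : 0 ≤ r) (hrs : r < s) (hs : s ≤ m) :
    (∑ i, a i ^ s) * (∑ j, a j ^ ((2 * m : ℝ) - s))
      ≤ (∑ i, a i ^ r) * (∑ j, a j ^ ((2 * m : ℝ) - r)) :=
  F_antitone_general m n a ha r s hrs hs
end

section
/- Let a_1,...,a_n be positive reals and F(r) = (Σ_{i=1}^n a_i^r)(Σ_{j=1}^n a_j^{2m-r}). If m ≤ r < s ≤ 2m, then F(r) ≤ F(s); i.e., F is nondecreasing on [m, 2m]. -/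
/-!
Expanding the product, `F(r) = ∑ᵢ ∑ⱼ aᵢ^r aⱼ^(2m-r)`, and pairing the terms `(i, j)` and `(j, i)`
reduces the claim to `x^r y^(c-r) + y^r x^(c-r) ≤ x^s y^(c-s) + y^s x^(c-s)` for `x, y > 0`,
`c = 2m`. The difference of the two sides factors as
`(xy)^(c-s) (x^(s-r) - y^(s-r)) (x^(r+s-c) - y^(r+s-c))`, and both exponents `s - r` and
`r + s - c` are nonnegative, so the two middle factors have the same sign.
-/

open Real Finset

lemma rpow_sub_rpow_mul_rpow_sub_rpow_nonneg {x y p q : ℝ} (hx : 0 ≤ x) (hy : 0 ≤ y)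
    (hp : 0 ≤ p) (hq : 0 ≤ q) : 0 ≤ (x ^ p - y ^ p) * (x ^ q - y ^ q) := by
  rcases le_total x y with hxy | hyx
  · exact mul_nonneg_of_nonpos_of_nonpos
      (sub_nonpos.2 (rpow_le_rpow hx hxy hp)) (sub_nonpos.2 (rpow_le_rpow hx hxy hq))
  · exact mul_nonneg
      (sub_nonneg.2 (rpow_le_rpow hy hyx hp)) (sub_nonneg.2 (rpow_le_rpow hy hyx hq))

lemma rpow_mul_rpow_add_rpow_mul_rpow_le {x y r s c : ℝ} (hx : 0 < x) (hy : 0 < y)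
    (hrs : r ≤ s) (hc : c ≤ r + s) :
    x ^ r * y ^ (c - r) + y ^ r * x ^ (c - r) ≤ x ^ s * y ^ (c - s) + y ^ s * x ^ (c - s) := by
  have split : ∀ z : ℝ, 0 < z → z ^ s = z ^ (c - s) * z ^ (s - r) * z ^ (r + s - c) ∧
      z ^ (c - r) = z ^ (c - s) * z ^ (s - r) ∧ z ^ r = z ^ (c - s) * z ^ (r + s - c) := by
    intro z hz
    simp only [← rpow_add hz]
    refine ⟨?_, ?_, ?_⟩ <;> ring_nf
  obtain ⟨hxs, hxcr, hxr⟩ := split x hx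
  obtain ⟨hys, hycr, hyr⟩ := split y hy
  have hprod := mul_nonneg (mul_nonneg (rpow_nonneg hx.le (c - s)) (rpow_nonneg hy.le (c - s)))
    (rpow_sub_rpow_mul_rpow_sub_rpow_nonneg (p := s - r) (q := r + s - c) hx.le hy.le
      (sub_nonneg.2 hrs) (sub_nonneg.2 hc))
  rw [hxs, hys, hxcr, hycr, hxr, hyr]
  linarith

lemma sum_rpow_mul_sum_rpow_sub_le {ι : Type*} (t : Finset ι) (a : ι → ℝ) (ha : ∀ i ∈ t, 0 < a i)
    {r s c : ℝ} (hrs : r ≤ s) (hc : c ≤ r + s) :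
    (∑ i ∈ t, a i ^ r) * (∑ j ∈ t, a j ^ (c - r))
      ≤ (∑ i ∈ t, a i ^ s) * (∑ j ∈ t, a j ^ (c - s)) := by
  have symmetrize : ∀ p : ℝ, 2 * ((∑ i ∈ t, a i ^ p) * (∑ j ∈ t, a j ^ (c - p)))
      = ∑ i ∈ t, ∑ j ∈ t, (a i ^ p * a j ^ (c - p) + a j ^ p * a i ^ (c - p)) := by
    intro p
    simp only [sum_add_distrib, sum_mul_sum]
    rw [sum_comm (f := fun i j => a j ^ p * a i ^ (c - p))]
    ring
  refine le_of_mul_le_mul_left ?_ two_pos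
  rw [symmetrize, symmetrize]
  refine sum_le_sum fun i hi => sum_le_sum fun j hj => ?_
  exact rpow_mul_rpow_add_rpow_mul_rpow_le (ha i hi) (ha j hj) hrs hc

theorem F_monotone_general (m n : ℕ) (a : Fin n → ℝ) (ha : ∀ i, 0 < a i)
    (r s : ℝ) (hr : (m : ℝ) ≤ r) (hrs : r < s) :
    (∑ i, a i ^ r) * (∑ j, a j ^ ((2 * m : ℝ) - r))
      ≤ (∑ i, a i ^ s) * (∑ j, a j ^ ((2 * m : ℝ) - s)) :=
  sum_rpow_mul_sum_rpow_sub_le univ a (fun i _ => ha i) hrs.le (by linarith)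

theorem F_monotone (m n : ℕ) (hm : 1 ≤ m) (a : Fin n → ℝ) (ha : ∀ i, 0 < a i)
    (r s : ℝ) (hr : (m : ℝ) ≤ r) (hrs : r < s) (hs : s ≤ 2 * m) :
    (∑ i, a i ^ r) * (∑ j, a j ^ ((2 * m : ℝ) - r))
      ≤ (∑ i, a i ^ s) * (∑ j, a j ^ ((2 * m : ℝ) - s)) :=
  F_monotone_general m n a ha r s hr hrs
end

section
/- Let a_1,...,a_n be positive reals (n ≥ 2) and F(r) = (Σ_{i=1}^n a_i^r)(Σ_{j=1}^n a_j^{2m-r}). If F(r) = F(s) for some 0 ≤ r < s ≤ m, then a_1 = a_2 = ... = a_n. -/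
/-!
Pair the terms of `F(t) = ∑ᵢ ∑ⱼ aᵢ^t aⱼ^(2m-t)` symmetrically. With `α = log aᵢ`, `β = log aⱼ`,
`aᵢ^t aⱼ^(2m-t) + aⱼ^t aᵢ^(2m-t) = 2 e^(m(α+β)) cosh((m-t)(α-β))`,
which is non-increasing in `t ≤ m` and strictly decreasing when `aᵢ ≠ aⱼ`.
Hence `F(s) < F(r)` unless all the `aᵢ` coincide.
-/

open Real Finset

noncomputable def crossPowerSum (M t x y : ℝ) : ℝ :=
  x ^ t * y ^ (2 * M - t) + y ^ t * x ^ (2 * M - t)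

section crossPowerSum

variable {M r s x y : ℝ}

theorem crossPowerSum_eq_cosh (hx : 0 < x) (hy : 0 < y) (t : ℝ) :
    crossPowerSum M t x y = 2 * exp (M * (log x + log y)) * cosh ((M - t) * (log x - log y)) := by
  rw [crossPowerSum, cosh_eq, rpow_def_of_pos hx, rpow_def_of_pos hy, rpow_def_of_pos hx,
    rpow_def_of_pos hy, ← exp_add, ← exp_add,
    show log x * t + log y * (2 * M - t)
      = M * (log x + log y) + -((M - t) * (log x - log y)) by ring,
    show log y * t + log x * (2 * M - t)
      = M * (log x + log y) + (M - t) * (log x - log y) by ring,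
    exp_add, exp_add]
  ring

theorem crossPowerSum_le (hx : 0 < x) (hy : 0 < y) (hrs : r ≤ s) (hs : s ≤ M) :
    crossPowerSum M s x y ≤ crossPowerSum M r x y := by
  rw [crossPowerSum_eq_cosh hx hy, crossPowerSum_eq_cosh hx hy]
  gcongr
  rw [cosh_le_cosh, abs_mul, abs_mul, abs_of_nonneg (sub_nonneg.2 hs),
    abs_of_nonneg (by linarith : 0 ≤ M - r)]
  gcongr

theorem crossPowerSum_lt (hx : 0 < x) (hy : 0 < y) (hxy : x ≠ y) (hrs : r < s) (hs : s ≤ M) :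
    crossPowerSum M s x y < crossPowerSum M r x y := by
  have hlog : 0 < |log x - log y| :=
    abs_pos.2 (sub_ne_zero.2 fun h => hxy (log_injOn_pos hx hy h))
  rw [crossPowerSum_eq_cosh hx hy, crossPowerSum_eq_cosh hx hy]
  gcongr
  rw [cosh_lt_cosh, abs_mul, abs_mul, abs_of_nonneg (sub_nonneg.2 hs),
    abs_of_nonneg (by linarith : 0 ≤ M - r)]
  gcongr

end crossPowerSum

theorem two_mul_sum_mul_sum_eq_sum_symm {ι R : Type*} [Fintype ι] [CommSemiring R]
    (f g : ι → R) :
    2 * ((∑ i, f i) * ∑ j, g j) = ∑ p : ι × ι, (f p.1 * g p.2 + f p.2 * g p.1) := by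
  rw [Fintype.sum_prod_type, two_mul, sum_mul_sum]
  simp only [sum_add_distrib]
  rw [sum_comm (f := fun i j => f j * g i)]

theorem F_eq_implies_const_general (m n : ℕ)
    (a : Fin n → ℝ) (ha : ∀ i, 0 < a i)
    (r s : ℝ) (hrs : r < s) (hs : s ≤ m)
    (heq : (∑ i, a i ^ r) * (∑ j, a j ^ ((2 * m : ℝ) - r))
      = (∑ i, a i ^ s) * (∑ j, a j ^ ((2 * m : ℝ) - s))) :
    ∀ i j, a i = a j := by
  intro i j
  by_contra hij
  have hpairs : ∀ t : ℝ, 2 * ((∑ i, a i ^ t) * ∑ j, a j ^ ((2 * m : ℝ) - t))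
      = ∑ p : Fin n × Fin n, crossPowerSum m t (a p.1) (a p.2) :=
    fun t => two_mul_sum_mul_sum_eq_sum_symm _ _
  have hlt : ∑ p : Fin n × Fin n, crossPowerSum m s (a p.1) (a p.2)
      < ∑ p : Fin n × Fin n, crossPowerSum m r (a p.1) (a p.2) :=
    sum_lt_sum (fun p _ => crossPowerSum_le (ha _) (ha _) hrs.le hs)
      ⟨(i, j), mem_univ _, crossPowerSum_lt (ha i) (ha j) hij hrs hs⟩
  rw [← hpairs, ← hpairs, heq] at hlt
  exact lt_irrefl _ hlt

theorem F_eq_implies_const (m n : ℕ) (hm : 1 ≤ m) (hn : 2 ≤ n)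
    (a : Fin n → ℝ) (ha : ∀ i, 0 < a i)
    (r s : ℝ) (hr : 0 ≤ r) (hrs : r < s) (hs : s ≤ m)
    (heq : (∑ i, a i ^ r) * (∑ j, a j ^ ((2 * m : ℝ) - r))
      = (∑ i, a i ^ s) * (∑ j, a j ^ ((2 * m : ℝ) - s))) :
    ∀ i j, a i = a j :=
  F_eq_implies_const_general m n a ha r s hrs hs heq
end

section
/- Let x_1,...,x_n be arbitrary real numbers, m a positive integer, and r an even natural number with 0 ≤ r ≤ m − 1. Then (Σ_{i=1}^n x_i^r)(Σ_{j=1}^n x_j^{2m−r}) ≥ (Σ_{i=1}^n x_i^{r+1})(Σ_{j=1}^n x_j^{2m−r−1}). -/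
/-! With `k = 2m - 2r - 1`, which is odd, the inequality reads
`(∑ xᵢʳ⁺¹)(∑ xᵢʳ⁺ᵏ) ≤ (∑ xᵢʳ)(∑ xᵢʳ⁺¹⁺ᵏ)`. This is Chebyshev's sum inequality for the
nonnegative weights `xᵢʳ` (as `r` is even) and the similarly ordered sequences `xᵢ` and `xᵢᵏ`
(as `t ↦ tᵏ` is monotone for odd `k`). -/

open Finset

variable {ι α : Type*} [Fintype ι] [CommRing α] [LinearOrder α] [IsStrictOrderedRing α]

theorem Monovary.sum_mul_sum_le_sum_mul_sum_of_nonneg {w f g : ι → α} (hw : ∀ i, 0 ≤ w i)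
    (hfg : Monovary f g) :
    (∑ i, w i * f i) * (∑ i, w i * g i) ≤ (∑ i, w i) * ∑ i, w i * (f i * g i) := by
  -- The double sum equals twice the difference of the two sides.
  have hdouble : 0 ≤ ∑ i, ∑ j, w i * w j * ((f j - f i) * (g j - g i)) :=
    sum_nonneg fun i _ ↦ sum_nonneg fun j _ ↦
      mul_nonneg (mul_nonneg (hw i) (hw j)) (hfg.sub_mul_sub_nonneg i j)
  have hexpand : ∀ i j, w i * w j * ((f j - f i) * (g j - g i)) =
      w i * (w j * (f j * g j)) + w j * (w i * (f i * g i))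
        - w i * f i * (w j * g j) - w j * f j * (w i * g i) := fun i j ↦ by ring
  simp only [hexpand, sum_sub_distrib, sum_add_distrib, ← sum_mul, ← mul_sum] at hdouble
  linarith

theorem sum_pow_succ_mul_sum_pow_add_le (x : ι → α) {r k : ℕ} (hr : Even r) (hk : Odd k) :
    (∑ i, x i ^ (r + 1)) * (∑ i, x i ^ (r + k)) ≤ (∑ i, x i ^ r) * ∑ i, x i ^ (r + 1 + k) := by
  have hmono : Monovary x fun i ↦ x i ^ k :=
    ((monovary_self x).comp_monotone_left hk.strictMono_pow.monotone).symm
  simpa only [pow_add, pow_succ, mul_assoc] using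
    hmono.sum_mul_sum_le_sum_mul_sum_of_nonneg fun i ↦ hr.pow_nonneg (x i)

theorem F_step_real (m n : ℕ) (hm : 1 ≤ m) (x : Fin n → ℝ)
    (r : ℕ) (hre : Even r) (hr : r ≤ m - 1) :
    (∑ i, x i ^ (r + 1)) * (∑ j, x j ^ (2 * m - r - 1))
      ≤ (∑ i, x i ^ r) * (∑ j, x j ^ (2 * m - r)) := by
  obtain ⟨s, rfl⟩ := Nat.exists_eq_add_of_le (show r + 1 ≤ m by omega)
  have hk : Odd (2 * s + 1) := odd_two_mul_add_one s
  rw [show 2 * (r + 1 + s) - r - 1 = r + (2 * s + 1) by omega,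
    show 2 * (r + 1 + s) - r = r + 1 + (2 * s + 1) by omega]
  exact sum_pow_succ_mul_sum_pow_add_le x hre hk
end
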